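/- arXiv:2006.08085 — 4 statements merged into one kernel-verified Lean document; each statement's English description precedes it below -/
import Mathlib

section
/- The derivative of Ψ satisfies 0 ≤ Ψ'(z) ≤ √(54/e) for every z ∈ ℝ. -/
/-- Ψ(z) = 0 for z ≤ 1/2 and Ψ(z) = exp(1 − 1/(2z−1)²) for z > 1/2. -/
noncomputable def Psi (z : ℝ) : ℝ :=
  if z ≤ 1/2 then 0 else Real.exp (1 - 1/(2*z - 1)^2)

/-!
Left of `1/2` the function `Ψ` is flat to second order: `y ≤ exp y` gives `Ψ x ≤ 4e (x - z)²` for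
every `z ≤ 1/2`, so `Ψ'(z) = 0`. Right of `1/2`, with `t = 2z - 1` and `s = 2/t²`, the square of
`Ψ'(z) = exp(1 - 1/t²) · 4/t³` equals `2e² · s³ e^{-s}`, and `s³ e^{-s} ≤ 27 e^{-3}` by the
inequality `y ≤ exp (y - 1)` at `y = s/3`; this gives `Ψ'(z)² ≤ 54/e`.
-/

open Real Filter Topology Asymptotics

theorem pow_mul_exp_neg_le (n : ℕ) {x : ℝ} (hx : 0 ≤ x) :
    x ^ n * exp (-x) ≤ n ^ n * exp (-n) := by
  rcases Nat.eq_zero_or_pos n with rfl | hn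
  · simpa using exp_le_one_iff.mpr (neg_nonpos.mpr hx)
  have hn' : (0 : ℝ) < n := by exact_mod_cast hn
  have key : (x / n) ^ n ≤ exp (x - n) := by
    calc (x / n) ^ n ≤ exp (x / n - 1) ^ n := by
          gcongr; linarith [add_one_le_exp (x / n - 1)]
      _ = exp (x - n) := by rw [← exp_nat_mul]; congr 1; field_simp
  rw [div_pow, div_le_iff₀ (by positivity)] at key
  calc x ^ n * exp (-x) ≤ exp (x - n) * n ^ n * exp (-x) := by gcongr
    _ = n ^ n * exp (-n) := by rw [mul_right_comm, ← exp_add]; ring_nf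

theorem exp_one_sub_one_div_le {s : ℝ} (hs : 0 < s) : exp (1 - 1 / s) ≤ exp 1 * s := by
  have hone : 1 ≤ exp (1 / s) * s :=
    calc 1 = (1 / s) * s := by field_simp
      _ ≤ exp (1 / s) * s := by gcongr; linarith [add_one_le_exp (1 / s)]
  rw [sub_eq_add_neg, exp_add, exp_neg]
  gcongr
  rw [inv_le_iff_one_le_mul₀ (exp_pos _)]
  linarith

theorem exp_one_sub_one_div_sq_mul_le_sqrt {t : ℝ} (ht : 0 < t) :
    exp (1 - 1 / t ^ 2) * (4 / t ^ 3) ≤ √(54 / exp 1) := by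
  rw [le_sqrt (by positivity) (by positivity)]
  have hmax : (2 / t ^ 2) ^ 3 * exp (-(2 / t ^ 2)) ≤ 3 ^ 3 * exp (-3) := by
    simpa using pow_mul_exp_neg_le 3 (x := 2 / t ^ 2) (by positivity)
  have hsq : exp (1 - 1 / t ^ 2) ^ 2 = exp 2 * exp (-(2 / t ^ 2)) := by
    rw [← exp_nat_mul, ← exp_add]; ring_nf
  have hexp : exp 2 * exp (-3) * exp 1 = 1 := by
    rw [← exp_add, ← exp_add]; norm_num
  calc (exp (1 - 1 / t ^ 2) * (4 / t ^ 3)) ^ 2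
        = 2 * exp 2 * ((2 / t ^ 2) ^ 3 * exp (-(2 / t ^ 2))) := by
          rw [mul_pow, hsq]; field_simp; ring
    _ ≤ 2 * exp 2 * (3 ^ 3 * exp (-3)) := by gcongr
    _ = 54 / exp 1 := by
          rw [eq_div_iff (exp_pos 1).ne']; linear_combination 54 * hexp

theorem psi_nonneg (x : ℝ) : 0 ≤ Psi x := by
  unfold Psi; split_ifs <;> positivity

theorem psi_le_of_le_half {z : ℝ} (hz : z ≤ 1 / 2) (x : ℝ) :
    Psi x ≤ 4 * exp 1 * (x - z) ^ 2 := by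
  unfold Psi
  split_ifs with hx
  · positivity
  · have ht : 0 < 2 * x - 1 := by linarith
    calc exp (1 - 1 / (2 * x - 1) ^ 2) ≤ exp 1 * (2 * x - 1) ^ 2 :=
          exp_one_sub_one_div_le (by positivity)
      _ ≤ exp 1 * (2 * x - 2 * z) ^ 2 := by gcongr; linarith
      _ = 4 * exp 1 * (x - z) ^ 2 := by ring

theorem psi_hasDerivAt_of_le_half {z : ℝ} (hz : z ≤ 1 / 2) : HasDerivAt Psi 0 z := by
  have hO : Psi =O[𝓝 z] fun x => ‖x - z‖ ^ 2 :=
    IsBigO.of_bound (4 * exp 1) <| Eventually.of_forall fun x => by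
      simpa [abs_of_nonneg (psi_nonneg x)] using psi_le_of_le_half hz x
  simpa using (hO.hasFDerivAt (𝕜 := ℝ) one_lt_two).hasDerivAt

theorem psi_hasDerivAt_of_half_lt {z : ℝ} (hz : 1 / 2 < z) :
    HasDerivAt Psi (exp (1 - 1 / (2 * z - 1) ^ 2) * (4 / (2 * z - 1) ^ 3)) z := by
  have ht : 2 * z - 1 ≠ 0 := by linarith
  have hexp : Psi =ᶠ[𝓝 z] fun x => exp (1 - ((2 * x - 1) ^ 2)⁻¹) := by
    filter_upwards [Ioi_mem_nhds hz] with x hx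
    rw [Psi, if_neg (not_le.mpr hx), one_div]
  have hlin : HasDerivAt (fun x : ℝ => 2 * x - 1) 2 z := by
    simpa using ((hasDerivAt_id z).const_mul 2).sub_const 1
  refine ((((hlin.fun_pow 2).fun_inv (pow_ne_zero 2 ht)).const_sub 1).exp.congr_of_eventuallyEq
    hexp).congr_deriv ?_
  field_simp
  ring

/-- The derivative of Ψ satisfies 0 ≤ Ψ'(z) ≤ √(54/e) for every z ∈ ℝ. -/
theorem psi_deriv_bound (z : ℝ) :
    0 ≤ deriv Psi z ∧ deriv Psi z ≤ Real.sqrt (54 / Real.exp 1) := by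
  rcases le_or_gt z (1 / 2) with hz | hz
  · rw [(psi_hasDerivAt_of_le_half hz).deriv]
    exact ⟨le_rfl, sqrt_nonneg _⟩
  · have ht : 0 < 2 * z - 1 := by linarith
    rw [(psi_hasDerivAt_of_half_lt hz).deriv]
    exact ⟨by positivity, exp_one_sub_one_div_sq_mul_le_sqrt ht⟩
end

section
/- The function f̂_T is a zero-chain: for every x ∈ ℝ^T and every index k with 0 ≤ k < T, if x_j = 0 for all coordinates j > k, then the partial derivative ∂_j f̂_T(x) = 0 for all coordinates j > k + 1. Equivalently, prog(∇ f̂_T(x)) ≤ prog(x) + 1 for every x ∈ ℝ^T. -/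
/-- Φ(z) = √e ∫_{−∞}^{z} exp(−t²/2) dt. -/
noncomputable def Phi (z : ℝ) : ℝ :=
  Real.sqrt (Real.exp 1) * ∫ t in Set.Iic z, Real.exp (-t^2/2)

/-- The 1-based `i`-th coordinate of `x` (junk value 0 out of range): `coord x i = x_{i+1}`
in 0-based terms. -/
noncomputable def coord {T : ℕ} (x : EuclideanSpace ℝ (Fin T)) (i : ℕ) : ℝ :=
  if h : i < T then x ⟨i, h⟩ else 0

/-- f̂_T(x) = −Ψ(1)Φ(x₁) + Σ_{i=1}^{T−1} [Ψ(−x_i)Φ(−x_{i+1}) − Ψ(x_i)Φ(x_{i+1})],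
where the 1-based coordinate x_i is `coord x (i-1)`. -/
noncomputable def fhat (T : ℕ) (x : EuclideanSpace ℝ (Fin T)) : ℝ :=
  -(Psi 1) * Phi (coord x 0) +
    ∑ i ∈ Finset.Ico 1 T,
      (Psi (-(coord x (i-1))) * Phi (-(coord x i)) - Psi (coord x (i-1)) * Phi (coord x i))

open scoped Classical in
/-- prog(x) = max{i ≥ 1 : x_i ≠ 0} (1-based), and 0 if x = 0. -/
noncomputable def prog {T : ℕ} (x : EuclideanSpace ℝ (Fin T)) : ℕ :=
  (Finset.univ.filter fun i : Fin T => x i ≠ 0).sup fun i => (i : ℕ) + 1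


/-!
Every summand of `fhat` carries a factor `Ψ(±x_i)` with `Ψ = 0` on `(-∞, 1/2]`. If `x_m = 0`
for `m > k`, then moving `x` by less than `1/2` in a coordinate beyond `k + 1` changes only
summands that vanish before and after the move, so `fhat` is constant on a segment through `x`
in that coordinate direction and the corresponding partial derivative is zero.
-/

open Topology

lemma Psi_eq_zero_of_abs_lt {z : ℝ} (h : |z| < 1/2) : Psi z = 0 := if_pos (abs_lt.mp h).2.le

lemma fderiv_apply_eq_zero_of_eventually_const_line {E F : Type*} [NormedAddCommGroup E]
    [NormedSpace ℝ E] [NormedAddCommGroup F] [NormedSpace ℝ F] {f : E → F} {x v : E}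
    (h : (fun t : ℝ => f (x + t • v)) =ᶠ[𝓝 0] fun _ => f x) : fderiv ℝ f x v = 0 := by
  by_cases hf : DifferentiableAt ℝ f x
  · rw [← hf.lineDeriv_eq_fderiv, lineDeriv, h.deriv_eq, deriv_const]
  · simp [fderiv_zero_of_not_differentiableAt hf]

lemma EuclideanSpace.gradient_apply {ι : Type*} [Fintype ι] [DecidableEq ι]
    {f : EuclideanSpace ℝ ι → ℝ} {x : EuclideanSpace ℝ ι} (j : ι) :
    gradient f x j = fderiv ℝ f x (EuclideanSpace.single j 1) := by
  rw [← inner_gradient_left, EuclideanSpace.inner_single_right]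
  simp

lemma coord_add_smul_single {T : ℕ} (x : EuclideanSpace ℝ (Fin T)) (j : Fin T) (t : ℝ) (m : ℕ) :
    coord (x + t • EuclideanSpace.single j 1) m = coord x m + if m = j then t else 0 := by
  unfold coord
  split_ifs with hm hmj hmj <;> simp_all [Fin.ext_iff]

lemma fhat_eq_of_coord_eq_of_abs_lt {T k : ℕ} {y z : EuclideanSpace ℝ (Fin T)}
    (hyz : ∀ m ≤ k, coord y m = coord z m)
    (hy : ∀ m, k ≤ m → |coord y m| < 1/2) (hz : ∀ m, k ≤ m → |coord z m| < 1/2) :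
    fhat T y = fhat T z := by
  unfold fhat
  rw [hyz 0 k.zero_le]
  congr 1
  refine Finset.sum_congr rfl fun i _ => ?_
  rcases le_or_gt i k with hik | hki
  · rw [hyz i hik, hyz (i - 1) (by omega)]
  · have hy_neg := hy (i - 1) (by omega)
    have hz_neg := hz (i - 1) (by omega)
    rw [← abs_neg] at hy_neg hz_neg
    simp [Psi_eq_zero_of_abs_lt hy_neg, Psi_eq_zero_of_abs_lt hz_neg,
      Psi_eq_zero_of_abs_lt (hy (i - 1) (by omega)), Psi_eq_zero_of_abs_lt (hz (i - 1) (by omega))]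

lemma gradient_fhat_apply_eq_zero {T k : ℕ} {x : EuclideanSpace ℝ (Fin T)}
    (hx : ∀ m : Fin T, k ≤ m → x m = 0) (j : Fin T) (hj : k < j) :
    gradient (fhat T) x j = 0 := by
  have hx' : ∀ m, k ≤ m → coord x m = 0 := fun m hm => by
    unfold coord
    split_ifs with hmT
    exacts [hx _ hm, rfl]
  rw [EuclideanSpace.gradient_apply]
  apply fderiv_apply_eq_zero_of_eventually_const_line
  filter_upwards [Metric.ball_mem_nhds (0 : ℝ) one_half_pos] with t ht
  rw [mem_ball_zero_iff, Real.norm_eq_abs] at ht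
  refine fhat_eq_of_coord_eq_of_abs_lt (k := k) (fun m hm => ?_) (fun m hm => ?_) fun m hm => ?_
  · rw [coord_add_smul_single, if_neg (by omega), add_zero]
  · rw [coord_add_smul_single, hx' m hm, zero_add]
    split_ifs
    exacts [ht, by norm_num]
  · simp [hx' m hm]

lemma prog_le_iff {T n : ℕ} (x : EuclideanSpace ℝ (Fin T)) :
    prog x ≤ n ↔ ∀ i : Fin T, n ≤ i → x i = 0 := by
  simp only [prog, Finset.sup_le_iff, Finset.mem_filter, Finset.mem_univ, true_and]
  exact forall_congr' fun i => by grind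

theorem fhat_zero_chain_general (T : ℕ) (x : EuclideanSpace ℝ (Fin T)) :
    (∀ k : ℕ, k < T → (∀ j : Fin T, k < (j : ℕ) + 1 → x j = 0) →
      ∀ j : Fin T, k + 1 < (j : ℕ) + 1 → gradient (fhat T) x j = 0) ∧
    prog (gradient (fhat T) x) ≤ prog x + 1 := by
  refine ⟨fun k _ hx j hj =>
    gradient_fhat_apply_eq_zero (k := k) (fun m hm => hx m (by omega)) j (by omega), ?_⟩
  rw [prog_le_iff]
  exact fun j hj => gradient_fhat_apply_eq_zero ((prog_le_iff x).mp le_rfl) j (by omega)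

/-- f̂_T is a zero-chain: if all (1-based) coordinates of x beyond k vanish, then all
partial derivatives beyond k+1 vanish; equivalently prog(∇f̂_T(x)) ≤ prog(x) + 1. -/
theorem fhat_zero_chain (T : ℕ) (hT : 1 ≤ T) (x : EuclideanSpace ℝ (Fin T)) :
    (∀ k : ℕ, k < T → (∀ j : Fin T, k < (j : ℕ) + 1 → x j = 0) →
      ∀ j : Fin T, k + 1 < (j : ℕ) + 1 → gradient (fhat T) x j = 0) ∧
    prog (gradient (fhat T) x) ≤ prog x + 1 :=
  fhat_zero_chain_general T x
end

section
/- For every integer T ≥ 1 and every x ∈ ℝ^T, f̂_T(0) − f̂_T(x) ≤ 12 T; in particular f̂_T(0) − inf_{x ∈ ℝ^T} f̂_T(x) ≤ 12 T. -/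
/-!
Since `0 ≤ Ψ ≤ e` and `0 ≤ Φ ≤ √e · √(2π)`, every product `Ψ(y) Φ(z)` lies in `[0, 12]`
(as `e^{3/2} √(2π) ≈ 11.2`). Hence `f̂_T(0) = −Ψ(1) Φ(0) ≤ 0`, while each of the `T` terms of
`f̂_T(x)` is at least `−12`.
-/

open Real MeasureTheory

lemma Psi_nonneg (z : ℝ) : 0 ≤ Psi z := by
  unfold Psi; split <;> positivity

lemma Psi_le_exp_one (z : ℝ) : Psi z ≤ exp 1 := by
  unfold Psi; split
  · positivity
  · exact exp_le_exp.2 (sub_le_self _ (by positivity))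

lemma integral_exp_neg_sq_div_two : ∫ t : ℝ, exp (-t ^ 2 / 2) = √(2 * π) := by
  simpa [div_eq_inv_mul, ← neg_mul, div_div_eq_mul_div, mul_comm] using integral_gaussian (1 / 2)

lemma integrable_exp_neg_sq_div_two : Integrable fun t : ℝ => exp (-t ^ 2 / 2) := by
  simpa [div_eq_inv_mul, ← neg_mul] using integrable_exp_neg_mul_sq (b := 1 / 2) (by norm_num)

lemma Phi_nonneg (z : ℝ) : 0 ≤ Phi z :=
  mul_nonneg (sqrt_nonneg _) (setIntegral_nonneg measurableSet_Iic fun _ _ => (exp_pos _).le)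

lemma Phi_le (z : ℝ) : Phi z ≤ √(exp 1) * √(2 * π) := by
  refine mul_le_mul_of_nonneg_left ?_ (sqrt_nonneg _)
  rw [← integral_exp_neg_sq_div_two]
  exact setIntegral_le_integral integrable_exp_neg_sq_div_two
    (Filter.Eventually.of_forall fun _ => (exp_pos _).le)

lemma exp_one_mul_sqrt_exp_one_mul_sqrt_two_pi_le : exp 1 * (√(exp 1) * √(2 * π)) ≤ 12 := by
  have hsq : (exp 1 * (√(exp 1) * √(2 * π))) ^ 2 = exp 1 ^ 3 * (2 * π) := by
    rw [mul_pow, mul_pow, sq_sqrt (exp_pos 1).le, sq_sqrt (by positivity)]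
    ring
  have he : exp 1 ^ 3 ≤ 2.7182818286 ^ 3 :=
    pow_le_pow_left₀ (exp_pos 1).le exp_one_lt_d9.le 3
  refine (pow_le_pow_iff_left₀ (by positivity) (by norm_num) two_ne_zero).1 ?_
  calc _ = exp 1 ^ 3 * (2 * π) := hsq
    _ ≤ 2.7182818286 ^ 3 * (2 * 3.15) :=
        mul_le_mul he (by linarith [pi_lt_d2]) (by positivity) (by positivity)
    _ ≤ 12 ^ 2 := by norm_num

lemma Psi_mul_Phi_le (y z : ℝ) : Psi y * Phi z ≤ 12 :=
  calc Psi y * Phi z ≤ exp 1 * (√(exp 1) * √(2 * π)) :=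
        mul_le_mul (Psi_le_exp_one y) (Phi_le z) (Phi_nonneg z) (exp_pos 1).le
    _ ≤ 12 := exp_one_mul_sqrt_exp_one_mul_sqrt_two_pi_le

lemma fhat_zero_nonpos (T : ℕ) : fhat T 0 ≤ 0 := by
  have hcoord (i : ℕ) : coord (0 : EuclideanSpace ℝ (Fin T)) i = 0 := by
    unfold coord; split <;> rfl
  simp only [fhat, hcoord, neg_zero, sub_self, Finset.sum_const_zero, add_zero, neg_mul,
    neg_nonpos]
  exact mul_nonneg (Psi_nonneg 1) (Phi_nonneg 0)

lemma neg_twelve_mul_le_fhat {T : ℕ} (hT : 1 ≤ T) (x : EuclideanSpace ℝ (Fin T)) :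
    -(12 * T : ℝ) ≤ fhat T x := by
  have hfirst : -12 ≤ -(Psi 1) * Phi (coord x 0) := by
    rw [neg_mul, neg_le_neg_iff]; exact Psi_mul_Phi_le _ _
  have hterm : ∀ i ∈ Finset.Ico 1 T, -12 ≤
      Psi (-(coord x (i-1))) * Phi (-(coord x i)) - Psi (coord x (i-1)) * Phi (coord x i) :=
    fun i _ => by
      linarith [mul_nonneg (Psi_nonneg (-(coord x (i-1)))) (Phi_nonneg (-(coord x i))),
        Psi_mul_Phi_le (coord x (i-1)) (coord x i)]
  have hsum := Finset.card_nsmul_le_sum _ _ _ hterm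
  rw [Nat.card_Ico, nsmul_eq_mul, Nat.cast_sub hT] at hsum
  unfold fhat
  push_cast at hsum
  linarith

/-- f̂_T(0) − f̂_T(x) ≤ 12·T for every x; in particular f̂_T(0) − inf f̂_T ≤ 12·T. -/
theorem fhat_bounded_gap (T : ℕ) (hT : 1 ≤ T) :
    (∀ x : EuclideanSpace ℝ (Fin T), fhat T 0 - fhat T x ≤ 12 * T) ∧
    fhat T 0 - (⨅ x : EuclideanSpace ℝ (Fin T), fhat T x) ≤ 12 * T := by
  have hgap (x : EuclideanSpace ℝ (Fin T)) : fhat T 0 - fhat T x ≤ 12 * T := by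
    linarith [fhat_zero_nonpos T, neg_twelve_mul_le_fhat hT x]
  refine ⟨hgap, ?_⟩
  have hinf : fhat T 0 - 12 * T ≤ ⨅ x, fhat T x :=
    le_ciInf fun x => by linarith [hgap x]
  linarith
end

section
/- Let (Ω, F, P) be a probability space with filtration (F_t)_{t ≥ 0}, and let (q_t)_{t ≥ 0} be random variables taking values in {0, 1} such that q_t is F_{t+1}-measurable and P(q_t = 1 | F_t) ≤ ρ almost surely for every t, where ρ ∈ (0, 1]. Define i_t = Σ_{s=0}^{t−1} q_s. Then for every δ ∈ (0, 1) and every integer T ≥ 1, with probability at least 1 − δ it holds that i_t < T for all t ≤ (T + log δ)/(ρ (e − 1)). -/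
open MeasureTheory ProbabilityTheory Real Finset

/-!
Since `q t ∈ [0, 1]`, convexity gives `exp (q t) ≤ 1 + (e - 1) q t`, so conditioning on `ℱ t`
shows that `exp (i_t)` grows in expectation by a factor at most `1 + ρ (e - 1) ≤ exp (ρ (e - 1))`
per step. Hence `E[exp i_N] ≤ exp (ρ (e - 1) N) ≤ δ e^T` for `N = ⌊(T + log δ) / (ρ (e - 1))⌋`,
and Markov's inequality bounds `P(i_N ≥ T)` by `δ`; as `i_t` is nondecreasing in `t`,
off this event `i_t < T` for all `t ≤ N`.
-/

lemma Real.exp_le_one_add_mul_of_mem_Icc {x : ℝ} (hx : x ∈ Set.Icc (0 : ℝ) 1) :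
    exp x ≤ 1 + (exp 1 - 1) * x := by
  have h := convexOn_exp.2 (Set.mem_univ 1) (Set.mem_univ 0) hx.1 (sub_nonneg.2 hx.2)
    (add_sub_cancel x 1)
  simp only [smul_eq_mul, mul_one, mul_zero, add_zero, exp_zero] at h
  linarith

lemma Set.indicator_setOf_eq_one_eq_self {α M : Type*} [Zero M] [One M] {f : α → M}
    (hf : ∀ a, f a = 0 ∨ f a = 1) : {a | f a = 1}.indicator (fun _ => (1 : M)) = f := by
  ext a
  by_cases h : f a = 1
  · simp [h]
  · simp [Set.indicator_of_notMem (show a ∉ {a | f a = 1} from h), (hf a).resolve_right h]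

theorem MeasureTheory.integral_mul_le_of_condExp_le {Ω : Type*} {m m0 : MeasurableSpace Ω}
    {μ : Measure Ω} [IsFiniteMeasure μ] (hm : m ≤ m0) {f g : Ω → ℝ} {ρ : ℝ}
    (hf : StronglyMeasurable[m] f) (hf0 : 0 ≤ᵐ[μ] f) (hfi : Integrable f μ)
    (hg : Integrable g μ) (hfg : Integrable (f * g) μ) (hgρ : ∀ᵐ ω ∂μ, μ[g|m] ω ≤ ρ) :
    ∫ ω, f ω * g ω ∂μ ≤ ρ * ∫ ω, f ω ∂μ := by
  have hpull := condExp_mul_of_stronglyMeasurable_left hf hfg hg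
  calc ∫ ω, f ω * g ω ∂μ = ∫ ω, μ[f * g|m] ω ∂μ := (integral_condExp hm).symm
    _ = ∫ ω, f ω * μ[g|m] ω ∂μ := integral_congr_ae hpull
    _ ≤ ∫ ω, f ω * ρ ∂μ := by
      refine integral_mono_ae (integrable_condExp.congr hpull) (hfi.mul_const ρ) ?_
      filter_upwards [hgρ, hf0] with ω hω hfω
      exact mul_le_mul_of_nonneg_left hω hfω
    _ = ρ * ∫ ω, f ω ∂μ := by rw [integral_mul_const, mul_comm]

lemma ofReal_one_sub_le_prob_compl {Ω : Type*} {m0 : MeasurableSpace Ω} {μ : Measure Ω}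
    [IsProbabilityMeasure μ] {s : Set Ω} {δ : ℝ} (hs : MeasurableSet s) (h : μ.real s ≤ δ) :
    ENNReal.ofReal (1 - δ) ≤ μ sᶜ := by
  rw [← ofReal_measureReal, probReal_compl_eq_one_sub hs]
  exact ENNReal.ofReal_le_ofReal (by linarith)

section PartialSums

variable {Ω : Type*} {m0 : MeasurableSpace Ω} {μ : Measure Ω} {ℱ : Filtration ℕ m0}
  {q : ℕ → Ω → ℝ}

lemma measurable_sum_range_of_adapted_succ (hq : ∀ t, Measurable[ℱ (t + 1)] (q t)) (n : ℕ) :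
    Measurable[ℱ n] fun ω => ∑ s ∈ range n, q s ω :=
  Finset.measurable_sum _ fun s hs => (hq s).mono (ℱ.mono (mem_range.1 hs)) le_rfl

lemma sum_range_le_of_mem_Icc (hq : ∀ t ω, q t ω ∈ Set.Icc (0 : ℝ) 1) (n : ℕ) (ω : Ω) :
    ∑ s ∈ range n, q s ω ≤ n := by
  simpa using Finset.sum_le_sum fun s (_ : s ∈ range n) => (hq s ω).2

lemma sum_range_lt_of_le_floor (hq0 : ∀ t ω, 0 ≤ q t ω) {a τ : ℝ} {ω : Ω}
    (h : ∑ s ∈ range ⌊τ⌋₊, q s ω < a) {t : ℕ} (ht : (t : ℝ) ≤ τ) :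
    ∑ s ∈ range t, q s ω < a :=
  lt_of_le_of_lt (sum_le_sum_of_subset_of_nonneg (range_subset_range.2 (Nat.le_floor ht))
    fun s _ _ => hq0 s ω) h

lemma integrable_exp_sum_range [IsFiniteMeasure μ] (hq : ∀ t ω, q t ω ∈ Set.Icc (0 : ℝ) 1)
    (hadapted : ∀ t, Measurable[ℱ (t + 1)] (q t)) (n : ℕ) :
    Integrable (fun ω => exp (∑ s ∈ range n, q s ω)) μ := by
  have hS := (measurable_sum_range_of_adapted_succ hadapted n).mono (ℱ.le n) le_rfl
  refine .of_bound hS.exp.aestronglyMeasurable (exp n) (.of_forall fun ω => ?_)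
  rw [norm_of_nonneg (exp_pos _).le, exp_le_exp]
  exact sum_range_le_of_mem_Icc hq n ω

theorem integral_exp_sum_range_le_pow [IsProbabilityMeasure μ] {ρ : ℝ} (hρ : 0 ≤ ρ)
    (hq : ∀ t ω, q t ω ∈ Set.Icc (0 : ℝ) 1) (hadapted : ∀ t, Measurable[ℱ (t + 1)] (q t))
    (hcond : ∀ t, ∀ᵐ ω ∂μ, μ[q t|ℱ t] ω ≤ ρ) (n : ℕ) :
    ∫ ω, exp (∑ s ∈ range n, q s ω) ∂μ ≤ (1 + ρ * (exp 1 - 1)) ^ n := by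
  induction n with
  | zero => simp
  | succ n ih =>
    set E : Ω → ℝ := fun ω => exp (∑ s ∈ range n, q s ω)
    have hE : Integrable E μ := integrable_exp_sum_range hq hadapted n
    have hqn_bdd : ∀ᵐ ω ∂μ, ‖q n ω‖ ≤ 1 := .of_forall fun ω => by
      rw [norm_of_nonneg (hq n ω).1]
      exact (hq n ω).2
    have hqn_meas := ((hadapted n).mono (ℱ.le _) le_rfl).aestronglyMeasurable (μ := μ)
    have hEq : Integrable (fun ω => E ω * q n ω) μ := hE.mul_bdd hqn_meas hqn_bdd
    have hexp1 : 0 ≤ exp 1 - 1 := by linarith [add_one_le_exp 1]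
    calc ∫ ω, exp (∑ s ∈ range (n + 1), q s ω) ∂μ
        ≤ ∫ ω, E ω + (exp 1 - 1) * (E ω * q n ω) ∂μ := by
          refine integral_mono (integrable_exp_sum_range hq hadapted _)
            (hE.add (hEq.const_mul _)) fun ω => ?_
          simp only [E, sum_range_succ, exp_add]
          nlinarith [exp_le_one_add_mul_of_mem_Icc (hq n ω), exp_pos (∑ s ∈ range n, q s ω)]
      _ = ∫ ω, E ω ∂μ + (exp 1 - 1) * ∫ ω, E ω * q n ω ∂μ := by
          rw [integral_add hE (hEq.const_mul _), integral_const_mul]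
      _ ≤ ∫ ω, E ω ∂μ + (exp 1 - 1) * (ρ * ∫ ω, E ω ∂μ) := by
          gcongr
          exact integral_mul_le_of_condExp_le (ℱ.le n)
            (measurable_sum_range_of_adapted_succ hadapted n).exp.stronglyMeasurable
            (.of_forall fun ω => (exp_pos _).le) hE
            (.of_bound hqn_meas 1 hqn_bdd) hEq (hcond n)
      _ = (1 + ρ * (exp 1 - 1)) * ∫ ω, E ω ∂μ := by ring
      _ ≤ (1 + ρ * (exp 1 - 1)) ^ (n + 1) := by
          rw [pow_succ']
          gcongr

theorem measureReal_sum_range_ge_le_exp [IsProbabilityMeasure μ] {ρ : ℝ} (hρ : 0 ≤ ρ)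
    (hq : ∀ t ω, q t ω ∈ Set.Icc (0 : ℝ) 1) (hadapted : ∀ t, Measurable[ℱ (t + 1)] (q t))
    (hcond : ∀ t, ∀ᵐ ω ∂μ, μ[q t|ℱ t] ω ≤ ρ) (n : ℕ) (a : ℝ) :
    μ.real {ω | a ≤ ∑ s ∈ range n, q s ω} ≤ exp (ρ * (exp 1 - 1) * n - a) := by
  set c := ρ * (exp 1 - 1)
  have hc : 0 ≤ c := mul_nonneg hρ (by linarith [add_one_le_exp 1])
  calc μ.real {ω | a ≤ ∑ s ∈ range n, q s ω}
      ≤ exp (-1 * a) * mgf (fun ω => ∑ s ∈ range n, q s ω) μ 1 :=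
        measure_ge_le_exp_mul_mgf a zero_le_one
          (by simpa using integrable_exp_sum_range hq hadapted n)
    _ ≤ exp (-1 * a) * (1 + c) ^ n := by
        gcongr
        simpa [mgf] using integral_exp_sum_range_le_pow hρ hq hadapted hcond n
    _ ≤ exp (-1 * a) * exp c ^ n := by
        gcongr
        linarith [add_one_le_exp c]
    _ = exp (c * n - a) := by
        rw [← exp_nat_mul, ← exp_add]
        ring_nf

end PartialSums

theorem chain_progress_high_prob_general {Ω : Type*} {m0 : MeasurableSpace Ω}
    (μ : Measure Ω) [IsProbabilityMeasure μ] (ℱ : Filtration ℕ m0)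
    (q : ℕ → Ω → ℝ) (hq01 : ∀ t ω, q t ω = 0 ∨ q t ω = 1)
    (hadapted : ∀ t, Measurable[ℱ (t + 1)] (q t))
    (ρ : ℝ) (hρ0 : 0 < ρ)
    (hcond : ∀ t, ∀ᵐ ω ∂μ,
      (μ[({ω | q t ω = 1}).indicator (fun _ => (1 : ℝ))|ℱ t]) ω ≤ ρ)
    (δ : ℝ) (hδ0 : 0 < δ) (T : ℕ) :
    ENNReal.ofReal (1 - δ) ≤
      μ {ω | ∀ t : ℕ, (t : ℝ) ≤ ((T : ℝ) + Real.log δ) / (ρ * (Real.exp 1 - 1)) →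
        ∑ s ∈ Finset.range t, q s ω < T} := by
  set c := ρ * (exp 1 - 1)
  have hc : 0 < c := mul_pos hρ0 (by linarith [add_one_lt_exp one_ne_zero])
  rcases lt_or_ge ((T + log δ) / c) 0 with hτ | hτ
  · have hgood : {ω | ∀ t : ℕ, (t : ℝ) ≤ (T + log δ) / c → ∑ s ∈ range t, q s ω < T} =
        Set.univ := Set.eq_univ_of_forall fun ω t ht => absurd (ht.trans_lt hτ) (by simp)
    rw [hgood, measure_univ]
    exact ENNReal.ofReal_le_one.2 (by linarith)
  have hq : ∀ t ω, q t ω ∈ Set.Icc (0 : ℝ) 1 := fun t ω => by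
    rcases hq01 t ω with h | h <;> simp [h]
  have hcond' : ∀ t, ∀ᵐ ω ∂μ, μ[q t|ℱ t] ω ≤ ρ := fun t => by
    simpa only [Set.indicator_setOf_eq_one_eq_self (hq01 t)] using hcond t
  set N := ⌊(T + log δ) / c⌋₊
  set bad := {ω | (T : ℝ) ≤ ∑ s ∈ range N, q s ω}
  have hbad : MeasurableSet bad := measurableSet_le measurable_const
    ((measurable_sum_range_of_adapted_succ hadapted N).mono (ℱ.le N) le_rfl)
  have hbad_le : μ.real bad ≤ δ := by
    refine (measureReal_sum_range_ge_le_exp hρ0.le hq hadapted hcond' N T).trans ?_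
    have hN : c * N ≤ T + log δ := (le_div_iff₀' hc).1 (Nat.floor_le hτ)
    calc exp (c * N - T) ≤ exp (log δ) := exp_le_exp.2 (by linarith)
      _ = δ := exp_log hδ0
  refine (ofReal_one_sub_le_prob_compl hbad hbad_le).trans (measure_mono fun ω hω t ht => ?_)
  exact sum_range_lt_of_le_floor (fun s ω => (hq s ω).1) (not_le.1 hω) ht

/-- High-probability bound: if q_t is F_{t+1}-measurable, {0,1}-valued, and
P(q_t = 1 | F_t) ≤ ρ a.s. with ρ ∈ (0,1], then for every δ ∈ (0,1) and T ≥ 1, with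
probability at least 1 − δ, i_t = Σ_{s<t} q_s < T for all t ≤ (T + log δ)/(ρ(e − 1)). -/
theorem chain_progress_high_prob {Ω : Type*} {m0 : MeasurableSpace Ω}
    (μ : Measure Ω) [IsProbabilityMeasure μ] (ℱ : Filtration ℕ m0)
    (q : ℕ → Ω → ℝ) (hq01 : ∀ t ω, q t ω = 0 ∨ q t ω = 1)
    (hadapted : ∀ t, Measurable[ℱ (t + 1)] (q t))
    (ρ : ℝ) (hρ0 : 0 < ρ) (hρ1 : ρ ≤ 1)
    (hcond : ∀ t, ∀ᵐ ω ∂μ,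
      (μ[({ω | q t ω = 1}).indicator (fun _ => (1 : ℝ))|ℱ t]) ω ≤ ρ)
    (δ : ℝ) (hδ0 : 0 < δ) (hδ1 : δ < 1) (T : ℕ) (hT : 1 ≤ T) :
    ENNReal.ofReal (1 - δ) ≤
      μ {ω | ∀ t : ℕ, (t : ℝ) ≤ ((T : ℝ) + Real.log δ) / (ρ * (Real.exp 1 - 1)) →
        ∑ s ∈ Finset.range t, q s ω < T} :=
  chain_progress_high_prob_general μ ℱ q hq01 hadapted ρ hρ0 hcond δ hδ0 T
end
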